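/- The maximum-likelihood estimate of the noise-free mean parameter: given complex observations q₁,…,q_N and the model ln P(q_n | q_{n−1}; ℓ, v) = −|q_n − (1−ℓ)q_{n−1}|²/(ℓ²v) − ln(π ℓ² v) for n ≥ 2, the stationary points of the log-likelihood in ℓ satisfy the quadratic equation (N−1)·v·ℓ² + K₁·ℓ + K₀ = 0, where K₁ = Σ_{n=2}^N (|q_{n−1}|² − Re(q_{n−1}* q_n)) and K₀ = −Σ_{n=2}^N |q_n − q_{n−1}|². -/

import Mathlib

open scoped BigOperators

open Finset

/-! Since `q n - (1 - t) q (n-1) = (q n - q (n-1)) + t q (n-1)`, each summand is a quadratic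
`A + 2 B t + C t²` divided by `t² v`, minus `2 log t`. Its derivative at `ℓ` is
`2 (A + B ℓ) / (ℓ³ v) - 2 / ℓ`, and multiplying the sum of these by `ℓ³ v / 2` gives the
quadratic. -/

lemma norm_sub_one_sub_mul_sq (a b : ℂ) (t : ℝ) :
    ‖b - (1 - (t : ℂ)) * a‖ ^ 2
      = ‖b - a‖ ^ 2 + 2 * ((starRingEnd ℂ a * b).re - ‖a‖ ^ 2) * t + ‖a‖ ^ 2 * t ^ 2 := by
  simp only [Complex.sq_norm, Complex.normSq_apply, Complex.sub_re, Complex.sub_im,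
    Complex.mul_re, Complex.mul_im, Complex.one_re, Complex.one_im, Complex.ofReal_re,
    Complex.ofReal_im, Complex.conj_re, Complex.conj_im]
  ring

lemma hasDerivAt_neg_quadratic_div_sq_sub_two_log {A B C v ℓ : ℝ} (hv : v ≠ 0) (hℓ : ℓ ≠ 0) :
    HasDerivAt (fun t : ℝ => -(A + 2 * B * t + C * t ^ 2) / (t ^ 2 * v) - 2 * Real.log t)
      (2 * (A + B * ℓ) / (ℓ ^ 3 * v) - 2 / ℓ) ℓ := by
  have hnum : HasDerivAt (fun t : ℝ => -(A + 2 * B * t + C * t ^ 2)) (-(2 * B + 2 * C * ℓ)) ℓ := by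
    refine ((((hasDerivAt_id ℓ).const_mul (2 * B)).const_add A).fun_add
      ((hasDerivAt_pow 2 ℓ).const_mul C)).fun_neg.congr_deriv ?_
    norm_num
    ring
  have hden : HasDerivAt (fun t : ℝ => t ^ 2 * v) (2 * ℓ * v) ℓ := by
    simpa using (hasDerivAt_pow 2 ℓ).mul_const v
  have hlog := (Real.hasDerivAt_log hℓ).const_mul 2
  refine ((hnum.fun_div hden (by positivity)).fun_sub hlog).congr_deriv ?_
  field_simp
  ring

lemma hasDerivAt_sum_logLik {ι : Type*} (s : Finset ι) (a b : ι → ℂ) {v ℓ : ℝ}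
    (hv : v ≠ 0) (hℓ : ℓ ≠ 0) :
    HasDerivAt (fun t : ℝ => ∑ i ∈ s,
        (-(‖b i - (1 - (t : ℂ)) * a i‖) ^ 2 / (t ^ 2 * v) - 2 * Real.log t))
      (∑ i ∈ s, (2 * (‖b i - a i‖ ^ 2 + ((starRingEnd ℂ (a i) * b i).re - ‖a i‖ ^ 2) * ℓ)
        / (ℓ ^ 3 * v) - 2 / ℓ)) ℓ := by
  refine HasDerivAt.fun_sum fun i _ => ?_
  simp only [norm_sub_one_sub_mul_sq]
  exact hasDerivAt_neg_quadratic_div_sq_sub_two_log hv hℓ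

theorem ar1_ml_stationary_points_general (N : ℕ) (hN : 2 ≤ N) (q : ℕ → ℂ)
    (v : ℝ) (hv : 0 < v) (ℓ : ℝ) (hℓ0 : 0 < ℓ) :
    ∀ y : ℝ,
      HasDerivAt (fun t : ℝ => ∑ n ∈ Finset.Icc 2 N,
          (-(‖q n - (1 - (t : ℂ)) * q (n - 1)‖)^2 / (t^2 * v)
            - 2 * Real.log t)) y ℓ →
      y = 0 →
      ((N : ℝ) - 1) * v * ℓ^2
        + (∑ n ∈ Finset.Icc 2 N,
            ((‖q (n - 1)‖)^2 - ((starRingEnd ℂ) (q (n - 1)) * q n).re)) * ℓ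
        + (-∑ n ∈ Finset.Icc 2 N, (‖q n - q (n - 1)‖)^2) = 0 := by
  intro y hy hy0
  have hderiv := hasDerivAt_sum_logLik (Icc 2 N) (fun n => q (n - 1)) q hv.ne' hℓ0.ne'
  have hcard : (#(Icc 2 N) : ℝ) = N - 1 := by
    rw [Nat.card_Icc, Nat.cast_sub (by omega)]
    push_cast
    ring
  have hstat : ∑ n ∈ Icc 2 N, (‖q n - q (n - 1)‖ ^ 2
      + ((starRingEnd ℂ (q (n - 1)) * q n).re - ‖q (n - 1)‖ ^ 2) * ℓ - v * ℓ ^ 2) = 0 := by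
    calc _ = ℓ ^ 3 * v / 2 * y := by
          rw [hy.unique hderiv, mul_sum]
          refine sum_congr rfl fun n _ => ?_
          field_simp
      _ = 0 := by rw [hy0, mul_zero]
  simp only [sum_sub_distrib, sum_add_distrib, ← sum_mul, sum_const, nsmul_eq_mul, hcard]
    at hstat ⊢
  linear_combination -hstat

/-- for the log-likelihood
`f(ℓ) = Σ_{n=2}^N [−|q_n −(1−ℓ)q_{n−1}|²/(ℓ²v) − 2 ln ℓ]` with `ℓ ∈ (0,1]`,
`v > 0`, any stationary point of `f` satisfies the quadratic equation
`(N−1)·v·ℓ² + K₁·ℓ + K₀ = 0`, where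
`K₁ = Σ_{n=2}^N (|q_{n−1}|² − Re(q_{n−1}* q_n))` and
`K₀ = −Σ_{n=2}^N |q_n − q_{n−1}|²`. -/
theorem ar1_ml_stationary_points (N : ℕ) (hN : 2 ≤ N) (q : ℕ → ℂ)
    (v : ℝ) (hv : 0 < v) (ℓ : ℝ) (hℓ0 : 0 < ℓ) (hℓ1 : ℓ ≤ 1) :
    ∀ y : ℝ,
      HasDerivAt (fun t : ℝ => ∑ n ∈ Finset.Icc 2 N,
          (-(‖q n - (1 - (t : ℂ)) * q (n - 1)‖)^2 / (t^2 * v)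
            - 2 * Real.log t)) y ℓ →
      y = 0 →
      ((N : ℝ) - 1) * v * ℓ^2
        + (∑ n ∈ Finset.Icc 2 N,
            ((‖q (n - 1)‖)^2 - ((starRingEnd ℂ) (q (n - 1)) * q n).re)) * ℓ
        + (-∑ n ∈ Finset.Icc 2 N, (‖q n - q (n - 1)‖)^2) = 0 :=
  ar1_ml_stationary_points_general N hN q v hv ℓ hℓ0
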